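/- Let A be an n×n complex positive definite matrix and B an n×n complex positive semidefinite matrix. Then det(A#B) = sqrt(det(A)·det(B)), where det(A) and det(B) are the (real, nonnegative) determinants of A and B. -/

import Mathlib

open Matrix
open scoped ComplexOrder
open scoped Classical

/-- The positive semidefinite square root of a positive semidefinite matrix
(junk value `0` if the matrix is not positive semidefinite). -/
noncomputable def psdSqrt {n : ℕ} (X : Matrix (Fin n) (Fin n) ℂ) : Matrix (Fin n) (Fin n) ℂ :=
  if h : X.PosSemidef then
    h.1.eigenvectorUnitary.1 * diagonal ((↑) ∘ Real.sqrt ∘ h.1.eigenvalues) *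
      (star h.1.eigenvectorUnitary : Matrix (Fin n) (Fin n) ℂ)
  else 0

/-- The matrix geometric mean `A # B = A^{1/2} (A^{-1/2} B A^{-1/2})^{1/2} A^{1/2}`,
where `A^{-1/2} = (A^{1/2})⁻¹`. -/
noncomputable def geomMean {n : ℕ} (A B : Matrix (Fin n) (Fin n) ℂ) :
    Matrix (Fin n) (Fin n) ℂ :=
  psdSqrt A * psdSqrt ((psdSqrt A)⁻¹ * B * (psdSqrt A)⁻¹) * psdSqrt A

/-!
The ad hoc square root `psdSqrt` is Mathlib's continuous-functional-calculus square root
`CFC.sqrt`, whose determinant is the square root of the determinant. With `S = A^{1/2}`,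
multiplicativity of `det` gives `det (S⁻¹ B S⁻¹) = det B / det A` and
`det (A # B) = det A · √(det B / det A) = √(det A · det B)`.
-/

open scoped MatrixOrder

theorem Real.mul_sqrt_div_eq_sqrt_mul {a : ℝ} (b : ℝ) (ha : 0 ≤ a) :
    a * √(b / a) = √(a * b) := by
  rcases ha.eq_or_lt with rfl | ha
  · simp
  rw [← Real.sqrt_sq ha.le, ← Real.sqrt_mul (sq_nonneg a), Real.sqrt_sq ha.le]
  congr 1
  field_simp

theorem psdSqrt_eq_cfcSqrt {n : ℕ} (X : Matrix (Fin n) (Fin n) ℂ) : psdSqrt X = CFC.sqrt X := by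
  by_cases h : X.PosSemidef
  · rw [psdSqrt, dif_pos h, CFC.sqrt_eq_cfc, cfc_nnreal_eq_real _ X (nonneg_iff_posSemidef.mpr h),
      h.1.cfc_eq, IsHermitian.cfc, Unitary.conjStarAlgAut_apply]
    congr 3
    funext i
    simp [max_eq_left (h.eigenvalues_nonneg i)]
  · rw [psdSqrt, dif_neg h, CFC.sqrt_eq_cfc, cfc_apply_of_not_predicate]
    rwa [nonneg_iff_posSemidef]

/-- det(A#B) = sqrt(det A · det B) for A positive definite and B positive
semidefinite (the determinants of A and B being real and nonnegative). -/
theorem det_geomMean {n : ℕ}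
    (A B : Matrix (Fin n) (Fin n) ℂ) (hA : A.PosDef) (hB : B.PosSemidef) :
    (geomMean A B).det = (Real.sqrt (A.det.re * B.det.re) : ℂ) := by
  obtain ⟨a, ha, hAa : (a : ℂ) = A.det⟩ :=
    RCLike.nonneg_iff_exists_ofReal.mp hA.posSemidef.det_nonneg
  obtain ⟨b, -, hBb : (b : ℂ) = B.det⟩ := RCLike.nonneg_iff_exists_ofReal.mp hB.det_nonneg
  set S := CFC.sqrt A
  have hS : S.det * S.det = A.det := by
    rw [← det_mul, CFC.sqrt_mul_sqrt_self A (nonneg_iff_posSemidef.mpr hA.posSemidef)]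
  have hM : (S⁻¹ * B * S⁻¹).PosSemidef := by
    have hSH : Sᴴ = S := (nonneg_iff_posSemidef.mp (CFC.sqrt_nonneg A)).isHermitian.eq
    simpa only [conjTranspose_nonsing_inv, hSH] using hB.mul_mul_conjTranspose_same S⁻¹
  have hMdet : (S⁻¹ * B * S⁻¹).det = (b / a : ℝ) := by
    rw [det_mul, det_mul, det_nonsing_inv, Ring.inverse_eq_inv', Complex.ofReal_div, hAa, hBb,
      ← hS]
    ring
  calc (geomMean A B).det = A.det * (CFC.sqrt (S⁻¹ * B * S⁻¹)).det := by
        rw [geomMean, psdSqrt_eq_cfcSqrt, psdSqrt_eq_cfcSqrt, det_mul, det_mul, mul_right_comm, hS]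
    _ = (a * √(b / a) : ℝ) := by
        rw [hM.det_sqrt, RCLike.sqrt_of_nonneg hM.det_nonneg, hMdet, ← hAa]
        simp
    _ = (Real.sqrt (A.det.re * B.det.re) : ℂ) := by
        rw [Real.mul_sqrt_div_eq_sqrt_mul b ha, ← hAa, ← hBb]
        simp
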